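/- arXiv:1810.08116 — 3 statements merged into one kernel-verified Lean document; each statement's English description precedes it below -/
import Mathlib

section
/- The edge set of the square grid can be partitioned into two sets E₁ and E₂ such that for each i ∈ {1,2}, the spanning subgraph of the square grid with edge set Eᵢ is a spanning double ray (i.e., it is connected and every vertex has degree exactly 2 in it). -/
/-- The square grid: the simple graph on `ℤ × ℤ` in which `(a,b)` and `(c,d)` are adjacent
if and only if `|a − c| + |b − d| = 1`. -/
def squareGrid : SimpleGraph (ℤ × ℤ) where
  Adj u v := |u.1 - v.1| + |u.2 - v.2| = 1
  symm := by
    constructor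
    intro u v h
    try beta_reduce at h ⊢
    rwa [abs_sub_comm v.1 u.1, abs_sub_comm v.2 u.2]
  loopless := by
    constructor
    intro u h
    simp at h

/-- `ω` is the edge set of a spanning double ray of `G`: the spanning subgraph of `G`
with edge set `ω` is connected and every vertex has degree exactly 2 in it. -/
def IsSpanningDoubleRayEdgeSet {V : Type*} (G : SimpleGraph V) (ω : Set (Sym2 V)) : Prop :=
  ω ⊆ G.edgeSet ∧ (SimpleGraph.fromEdgeSet ω).Connected ∧
    ∀ v : V, ((SimpleGraph.fromEdgeSet ω).neighborSet v).ncard = 2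

/-!
The two double rays are explicit spirals. Colour the horizontal edge from `(a, b)` to `(a + 1, b)`
by the parity of `a + b`, flipped below the `x`-axis, and the vertical edge from `(a, b)` to
`(a, b + 1)` by the parity of `a + b`, flipped left of the `y`-axis; the half-axes are split
between the half-planes so that the origin is the only vertex whose two horizontal edges get the
same colour (and so do its two vertical ones). Every other vertex has exactly one horizontal and
one vertical edge of each colour, so both colour classes are 2-regular. The edges of a colour
class form staircases along the diamonds `|a| + |b| = const`, which the flips at the axes chain
into a single spiral winding into the origin; connectedness follows from a lexicographic potential
that decreases along the spiral.
-/

theorem SimpleGraph.connected_of_forall_exists_adj_lt {V α : Type*} [LT α] [WellFoundedLT α]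
    {G : SimpleGraph V} (f : V → α) (v₀ : V) (h : ∀ v ≠ v₀, ∃ w, G.Adj v w ∧ f w < f v) :
    G.Connected := by
  have reach (v : V) : G.Reachable v v₀ := by
    induction v using (InvImage.wf f wellFounded_lt).induction with
    | _ v ih =>
      by_cases hv : v = v₀
      · exact hv ▸ .refl v
      · obtain ⟨w, hvw, hfw⟩ := h v hv
        exact hvw.reachable.trans (ih w hfw)
  exact (SimpleGraph.connected_iff G).2 ⟨fun u v => (reach u).trans (reach v).symm, ⟨v₀⟩⟩

theorem isSpanningDoubleRayEdgeSet_edgeSet {V : Type*} {G H : SimpleGraph V} (hle : H ≤ G)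
    (hconn : H.Connected) (hdeg : ∀ v, (H.neighborSet v).ncard = 2) :
    IsSpanningDoubleRayEdgeSet G H.edgeSet := by
  rw [IsSpanningDoubleRayEdgeSet, SimpleGraph.fromEdgeSet_edgeSet]
  exact ⟨SimpleGraph.edgeSet_subset_edgeSet.2 hle, hconn, hdeg⟩

theorem squareGrid_adj_iff {v w : ℤ × ℤ} :
    squareGrid.Adj v w ↔ w = (v.1 + 1, v.2) ∨ w = (v.1 - 1, v.2) ∨
      w = (v.1, v.2 + 1) ∨ w = (v.1, v.2 - 1) := by
  change |v.1 - w.1| + |v.2 - w.2| = 1 ↔ _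
  simp only [Prod.ext_iff]
  rcases abs_cases (v.1 - w.1) with ⟨h₁, h₁'⟩ | ⟨h₁, h₁'⟩ <;>
    rcases abs_cases (v.2 - w.2) with ⟨h₂, h₂'⟩ | ⟨h₂, h₂'⟩ <;> rw [h₁, h₂] <;> omega

namespace SquareGridSpiral

def IsUpper (v : ℤ × ℤ) : Prop := 0 < v.2 ∨ v.2 = 0 ∧ 0 ≤ v.1

def IsRight (v : ℤ × ℤ) : Prop := 0 < v.1 ∨ v.1 = 0 ∧ v.2 < 0

def HasRightEdge (ε : ℤ) (v : ℤ × ℤ) : Prop := (v.1 + v.2 + ε) % 2 = 0 ↔ IsUpper v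

def HasUpEdge (ε : ℤ) (v : ℤ × ℤ) : Prop := (v.1 + v.2 + ε) % 2 = 0 ↔ IsRight v

def spiral (ε : ℤ) : SimpleGraph (ℤ × ℤ) := SimpleGraph.fromRel fun v w =>
  w = (v.1 + 1, v.2) ∧ HasRightEdge ε v ∨ w = (v.1, v.2 + 1) ∧ HasUpEdge ε v

variable {ε : ℤ} {v w : ℤ × ℤ}

theorem spiral_adj_iff : (spiral ε).Adj v w ↔
    w = (v.1 + 1, v.2) ∧ HasRightEdge ε v ∨ w = (v.1 - 1, v.2) ∧ HasRightEdge ε (v.1 - 1, v.2) ∨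
      w = (v.1, v.2 + 1) ∧ HasUpEdge ε v ∨ w = (v.1, v.2 - 1) ∧ HasUpEdge ε (v.1, v.2 - 1) := by
  have flip_right : v = (w.1 + 1, w.2) ∧ HasRightEdge ε w ↔
      w = (v.1 - 1, v.2) ∧ HasRightEdge ε (v.1 - 1, v.2) := by
    constructor <;> rintro ⟨rfl, h⟩ <;> simpa using h
  have flip_up : v = (w.1, w.2 + 1) ∧ HasUpEdge ε w ↔
      w = (v.1, v.2 - 1) ∧ HasUpEdge ε (v.1, v.2 - 1) := by
    constructor <;> rintro ⟨rfl, h⟩ <;> simpa using h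
  rw [spiral, SimpleGraph.fromRel_adj, flip_right, flip_up, or_or_or_comm, or_assoc,
    and_iff_right_iff_imp]
  rintro (⟨rfl, -⟩ | ⟨rfl, -⟩ | ⟨rfl, -⟩ | ⟨rfl, -⟩) <;> simp only [ne_eq, Prod.ext_iff] <;> omega

theorem hasRightEdge_add_one_iff : HasRightEdge (ε + 1) v ↔ ¬HasRightEdge ε v := by
  simp only [HasRightEdge, IsUpper]
  omega

theorem hasUpEdge_add_one_iff : HasUpEdge (ε + 1) v ↔ ¬HasUpEdge ε v := by
  simp only [HasUpEdge, IsRight]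
  omega

theorem spiral_le_squareGrid : spiral ε ≤ squareGrid := fun v w h => by
  rw [spiral_adj_iff] at h
  rw [squareGrid_adj_iff]
  tauto

theorem spiral_sup_spiral_add_one : spiral ε ⊔ spiral (ε + 1) = squareGrid := by
  refine le_antisymm (sup_le spiral_le_squareGrid spiral_le_squareGrid) fun v w h => ?_
  simp only [SimpleGraph.sup_adj, spiral_adj_iff, hasRightEdge_add_one_iff, hasUpEdge_add_one_iff]
  rw [squareGrid_adj_iff] at h
  tauto

theorem disjoint_spiral_spiral_add_one : Disjoint (spiral ε) (spiral (ε + 1)) := by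
  refine SimpleGraph.disjoint_left.2 fun v w h₀ h₁ => ?_
  rw [spiral_adj_iff] at h₀ h₁
  simp only [hasRightEdge_add_one_iff, hasUpEdge_add_one_iff] at h₁
  rcases h₀ with ⟨rfl, h⟩ | ⟨rfl, h⟩ | ⟨rfl, h⟩ | ⟨rfl, h⟩ <;>
    rcases h₁ with ⟨h₁, h'⟩ | ⟨h₁, h'⟩ | ⟨h₁, h'⟩ | ⟨h₁, h'⟩ <;>
    first | exact h' h | (simp only [Prod.ext_iff] at h₁; omega)

theorem hasRightEdge_sub_one_iff (hv : v ≠ (0, 0)) :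
    HasRightEdge ε (v.1 - 1, v.2) ↔ ¬HasRightEdge ε v := by
  simp only [HasRightEdge, IsUpper, ne_eq, Prod.ext_iff] at hv ⊢
  omega

theorem hasUpEdge_sub_one_iff (hv : v ≠ (0, 0)) :
    HasUpEdge ε (v.1, v.2 - 1) ↔ ¬HasUpEdge ε v := by
  simp only [HasUpEdge, IsRight, ne_eq, Prod.ext_iff] at hv ⊢
  omega

theorem ncard_neighborSet_spiral (ε : ℤ) (v : ℤ × ℤ) : ((spiral ε).neighborSet v).ncard = 2 := by
  simp only [Set.ncard_eq_two, Set.ext_iff, SimpleGraph.mem_neighborSet, spiral_adj_iff,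
    Set.mem_insert_iff, Set.mem_singleton_iff]
  by_cases hv : v = (0, 0)
  · subst hv
    simp only [HasRightEdge, HasUpEdge, IsUpper, IsRight]
    by_cases hε : ε % 2 = 0
    · exact ⟨(1, 0), (-1, 0), by decide, fun w => by simp only [Prod.ext_iff, true_and]; omega⟩
    · exact ⟨(0, 1), (0, -1), by decide, fun w => by simp only [Prod.ext_iff, true_and]; omega⟩
  obtain ⟨x, hx₂, hx⟩ : ∃ x : ℤ × ℤ, x.2 = v.2 ∧ ∀ w, (w = (v.1 + 1, v.2) ∧ HasRightEdge ε v ∨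
      w = (v.1 - 1, v.2) ∧ HasRightEdge ε (v.1 - 1, v.2)) ↔ w = x := by
    rw [hasRightEdge_sub_one_iff hv]
    by_cases h : HasRightEdge ε v
    · exact ⟨(v.1 + 1, v.2), rfl, by simp [h]⟩
    · exact ⟨(v.1 - 1, v.2), rfl, by simp [h]⟩
  obtain ⟨y, hy₂, hy⟩ : ∃ y : ℤ × ℤ, y.2 ≠ v.2 ∧ ∀ w, (w = (v.1, v.2 + 1) ∧ HasUpEdge ε v ∨
      w = (v.1, v.2 - 1) ∧ HasUpEdge ε (v.1, v.2 - 1)) ↔ w = y := by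
    rw [hasUpEdge_sub_one_iff hv]
    by_cases h : HasUpEdge ε v
    · exact ⟨(v.1, v.2 + 1), by simp, by simp [h]⟩
    · exact ⟨(v.1, v.2 - 1), by simp, by simp [h]⟩
  refine ⟨x, y, fun h => hy₂ (h ▸ hx₂), fun w => ?_⟩
  rw [← or_assoc, hx, hy]

/-- `spiralLap` is constant on each quarter turn of the spiral and drops from one quarter turn
to the next one towards the origin; within a quarter turn, `spiralPosition` drops. -/
def spiralLap (ε : ℤ) : ℤ × ℤ → ℤ
  | (x, y) =>
    if 1 ≤ x ∧ 0 ≤ y then 4 * ((x + y - (x + y + ε) % 2) / 2) + 3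
    else if x ≤ 0 ∧ 1 ≤ y then 4 * ((y - x + (x + y + ε) % 2) / 2) + 2
    else if x ≤ -1 ∧ y ≤ 0 then 4 * ((-x - y - (x + y + ε) % 2) / 2) + 5
    else 4 * ((x - y + (x + y + ε) % 2) / 2)

def spiralPosition (ε : ℤ) : ℤ × ℤ → ℤ
  | (x, y) =>
    if 1 ≤ x ∧ 0 ≤ y then 2 * x - (x + y + ε) % 2
    else if x ≤ 0 ∧ 1 ≤ y then 2 * y + (x + y + ε) % 2
    else if x ≤ -1 ∧ y ≤ 0 then -2 * x - (x + y + ε) % 2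
    else -2 * y + (x + y + ε) % 2

def spiralPotential (ε : ℤ) (v : ℤ × ℤ) : ℕ ×ₗ ℕ :=
  toLex ((spiralLap ε v).toNat, (spiralPosition ε v).toNat)

set_option maxHeartbeats 400000 in
theorem exists_spiral_adj_spiralPotential_lt (hv : v ≠ (0, 0)) :
    ∃ w, (spiral ε).Adj v w ∧ spiralPotential ε w < spiralPotential ε v := by
  obtain ⟨a, b⟩ := v
  simp only [ne_eq, Prod.mk.injEq] at hv
  simp only [spiral_adj_iff, spiralPotential, Prod.Lex.toLex_lt_toLex, spiralLap, spiralPosition,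
    HasRightEdge, HasUpEdge, IsUpper, IsRight]
  by_cases hp : (a + b + ε) % 2 = 0
  · by_cases hr : 1 ≤ a ∨ a = 0 ∧ b ≤ -1
    · refine ⟨(a, b + 1), by simp only [Prod.mk.injEq, true_and]; omega, ?_⟩
      split_ifs <;> omega
    · refine ⟨(a, b - 1), by simp only [Prod.mk.injEq, true_and]; omega, ?_⟩
      split_ifs <;> omega
  · by_cases hu : 1 ≤ b ∨ b = 0 ∧ 1 ≤ a
    · refine ⟨(a - 1, b), by simp only [Prod.mk.injEq, true_and]; omega, ?_⟩
      split_ifs <;> omega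
    · refine ⟨(a + 1, b), by simp only [Prod.mk.injEq, true_and]; omega, ?_⟩
      split_ifs <;> omega

theorem spiral_connected (ε : ℤ) : (spiral ε).Connected :=
  SimpleGraph.connected_of_forall_exists_adj_lt (spiralPotential ε) (0, 0) fun _ hv =>
    exists_spiral_adj_spiralPotential_lt hv

end SquareGridSpiral

/-- The edge set of the square grid can be partitioned into two sets, each of which is the
edge set of a spanning double ray of the square grid. -/
theorem edge_partition_of_squareGrid_into_two_double_rays :
    ∃ E₁ E₂ : Set (Sym2 (ℤ × ℤ)),
      Disjoint E₁ E₂ ∧ E₁ ∪ E₂ = squareGrid.edgeSet ∧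
      IsSpanningDoubleRayEdgeSet squareGrid E₁ ∧
      IsSpanningDoubleRayEdgeSet squareGrid E₂ := by
  have isDoubleRay (ε : ℤ) :
      IsSpanningDoubleRayEdgeSet squareGrid (SquareGridSpiral.spiral ε).edgeSet :=
    isSpanningDoubleRayEdgeSet_edgeSet SquareGridSpiral.spiral_le_squareGrid
      (SquareGridSpiral.spiral_connected ε) (SquareGridSpiral.ncard_neighborSet_spiral ε)
  refine ⟨(SquareGridSpiral.spiral 0).edgeSet, (SquareGridSpiral.spiral 1).edgeSet, ?_, ?_,
    isDoubleRay 0, isDoubleRay 1⟩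
  · exact SimpleGraph.disjoint_edgeSet.2 SquareGridSpiral.disjoint_spiral_spiral_add_one
  · rw [← SimpleGraph.edgeSet_sup]
    exact congrArg _ SquareGridSpiral.spiral_sup_spiral_add_one
end

section
/- Let Γ be an infinite abelian group and S a finite symmetric generating set of Γ not containing the identity, so that the Cayley graph G = Cay(Γ,S) is connected and locally finite. Then G contains a spanning double ray, i.e., there is a spanning subgraph of G that is connected and in which every vertex has degree exactly 2. -/
open Subgroup

namespace NashW

variable {Γ : Type*} [CommGroup Γ]

lemma lift_bijective (s : Γ) (hs : ¬ IsOfFinOrder s) {I : Type*} (g : I → Γ)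
    (hb : Function.Bijective (fun i => (QuotientGroup.mk' (zpowers s)) (g i))) :
    Function.Bijective (fun x : ℤ × I => g x.2 * s ^ x.1) := by
  set π := QuotientGroup.mk' (zpowers s) with hπ
  have hπs : ∀ p : ℤ, π (s ^ p) = 1 := by
    intro p
    rw [map_zpow, show π s = 1 from (QuotientGroup.eq_one_iff _).2 (mem_zpowers s), one_zpow]
  constructor
  · rintro ⟨p, i⟩ ⟨p', i'⟩ h
    simp only at h
    have h2 : π (g i) = π (g i') := by
      have := congrArg π h
      rwa [map_mul, map_mul, hπs, hπs, mul_one, mul_one] at this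
    have hii : i = i' := hb.1 h2
    subst hii
    have hpp : p = p' := (injective_zpow_iff_not_isOfFinOrder.2 hs) (mul_left_cancel h)
    rw [hpp]
  · intro γ
    obtain ⟨i, hi⟩ := hb.2 (π γ)
    have : (g i)⁻¹ * γ ∈ zpowers s := by
      rw [← QuotientGroup.eq_one_iff]
      have hi' : π (g i) = π γ := hi
      show π ((g i)⁻¹ * γ) = 1
      rw [map_mul, map_inv, hi', inv_mul_cancel]
    obtain ⟨p, hp⟩ := this
    exact ⟨(p, i), by simp [hp, mul_inv_cancel_left]⟩

/-- Abstract gluing: an enumeration of `ℤ × I` with grid-like steps plus a lifted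
system of coset representatives gives a Hamiltonian sequence in `Γ`. -/
lemma glue (S : Set Γ) {s : Γ} (hsS : s ∈ S) (hsymm : ∀ x ∈ S, x⁻¹ ∈ S)
    (hs : ¬ IsOfFinOrder s) {I : Type*} (g : I → Γ)
    (hb : Function.Bijective (fun i => (QuotientGroup.mk' (zpowers s)) (g i)))
    (E : ℤ ≃ ℤ × I)
    (hE : ∀ n : ℤ, ((E n).2 = (E (n+1)).2 ∧
        ((E (n+1)).1 = (E n).1 + 1 ∨ (E n).1 = (E (n+1)).1 + 1)) ∨
      ((E n).1 = (E (n+1)).1 ∧ (g (E n).2)⁻¹ * g (E (n+1)).2 ∈ S)) :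
    ∃ f : ℤ ≃ Γ, ∀ n : ℤ, (f n)⁻¹ * f (n+1) ∈ S := by
  refine ⟨E.trans (Equiv.ofBijective _ (lift_bijective s hs g hb)), fun n => ?_⟩
  have hval : ∀ m : ℤ, (E.trans (Equiv.ofBijective _ (lift_bijective s hs g hb))) m
      = g (E m).2 * s ^ (E m).1 := fun m => rfl
  rw [hval, hval]
  rcases hE n with ⟨h2, h1 | h1⟩ | ⟨h1, h2⟩
  · rw [← h2, h1]
    have : (g (E n).2 * s ^ (E n).1)⁻¹ * (g (E n).2 * s ^ ((E n).1 + 1)) = s := by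
      rw [mul_inv_rev, zpow_add_one]
      group
    rwa [this]
  · rw [← h2, h1]
    have : (g (E n).2 * s ^ ((E (n+1)).1 + 1))⁻¹ * (g (E n).2 * s ^ ((E (n+1)).1)) = s⁻¹ := by
      rw [mul_inv_rev, zpow_add_one]
      group
    rw [this]
    exact hsymm _ hsS
  · rw [← h1]
    have : (g (E n).2 * s ^ (E n).1)⁻¹ * (g (E (n+1)).2 * s ^ (E n).1)
        = (g (E n).2)⁻¹ * g (E (n+1)).2 := by
      simp [mul_inv_rev, mul_comm, mul_left_comm, mul_assoc]
    rwa [this]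

end NashW

namespace NashW

def twist (k : ℕ) : ℤ × Fin k ≃ ℤ × Fin k where
  toFun p := (p.1, if Even p.1 then p.2 else p.2.rev)
  invFun p := (p.1, if Even p.1 then p.2 else p.2.rev)
  left_inv p := by by_cases h : Even p.1 <;> simp [h]
  right_inv p := by by_cases h : Even p.1 <;> simp [h]

lemma strip_double_ray (k : ℕ) [NeZero k] :
    ∃ E : ℤ ≃ ℤ × Fin k, ∀ n : ℤ,
      ((E n).2 = (E (n+1)).2 ∧ ((E (n+1)).1 = (E n).1 + 1 ∨ (E n).1 = (E (n+1)).1 + 1)) ∨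
      ((E n).1 = (E (n+1)).1 ∧
        ((E n).2.val + 1 = (E (n+1)).2.val ∨ (E (n+1)).2.val + 1 = (E n).2.val)) := by
  have hk : 0 < k := Nat.pos_of_ne_zero (NeZero.ne k)
  refine ⟨(Int.divModEquiv k).trans (twist k), fun n => ?_⟩
  set d := Int.divModEquiv k with hd
  have key : ∀ z : ℤ, ((d z).1 : ℤ) * k + ((d z).2.val : ℤ) = z := by
    intro z
    have h := d.symm_apply_apply z
    rw [hd] at h
    rw [Int.divModEquiv_symm_apply] at h
    exact h
  set m : ℤ := (d n).1 with hm
  set r : Fin k := (d n).2 with hr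
  set m' : ℤ := (d (n+1)).1 with hm'
  set r' : Fin k := (d (n+1)).2 with hr'
  have k1 : m * k + (r.val : ℤ) = n := key n
  have k2 : m' * k + (r'.val : ℤ) = n + 1 := key (n+1)
  have hrk : (r.val : ℤ) < k := by exact_mod_cast r.isLt
  have hrk' : (r'.val : ℤ) < k := by exact_mod_cast r'.isLt
  have hr0 : (0:ℤ) ≤ r.val := Int.natCast_nonneg _
  have hr0' : (0:ℤ) ≤ r'.val := Int.natCast_nonneg _
  have hkz : (0:ℤ) < k := by exact_mod_cast hk
  have hD : (m' - m) * k = (r.val : ℤ) - r'.val + 1 := by ring_nf; linarith [k1, k2]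
  have hcase : (m' = m ∧ (r'.val : ℤ) = r.val + 1) ∨
      (m' = m + 1 ∧ (r.val : ℤ) = k - 1 ∧ (r'.val : ℤ) = 0) := by
    have h0 : 0 ≤ m' - m := by
      by_contra hc
      push_neg at hc
      have h1 : m' - m ≤ -1 := by omega
      have := mul_le_mul_of_nonneg_right h1 (le_of_lt hkz)
      rw [hD] at this
      linarith
    have h1 : m' - m ≤ 1 := by
      by_contra hc
      push_neg at hc
      have h1 : 2 ≤ m' - m := by omega
      have := mul_le_mul_of_nonneg_right h1 (le_of_lt hkz)
      rw [hD] at this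
      linarith
    have : m' - m = 0 ∨ m' - m = 1 := by omega
    rcases this with h | h
    · left
      constructor
      · omega
      · rw [h] at hD; linarith [hD]
    · right
      rw [h, one_mul] at hD
      refine ⟨by omega, by omega, by omega⟩
  -- unfold the twist
  have hEn : ((Int.divModEquiv k).trans (twist k)) n = (m, if Even m then r else r.rev) := rfl
  have hEn' : ((Int.divModEquiv k).trans (twist k)) (n+1) = (m', if Even m' then r' else r'.rev) := rfl
  rw [hEn, hEn']
  rcases hcase with ⟨hmm, hrr⟩ | ⟨hmm, hra, hrb⟩
  · -- vertical step
    right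
    have hval : r'.val = r.val + 1 := by exact_mod_cast hrr
    refine ⟨by simp [hmm], ?_⟩
    simp only [hmm]
    by_cases hpar : Even m <;> simp only [hpar, if_true, if_false, Fin.val_rev]
    · left; omega
    · right
      have := r.isLt
      have := r'.isLt
      omega
  · -- horizontal step
    left
    have hvala : r.val = k - 1 := by omega
    have hvalb : r'.val = 0 := by exact_mod_cast hrb
    constructor
    · by_cases hpar : Even m
      · have hpar' : ¬ Even m' := by rw [hmm]; simp [Int.even_add_one, hpar]
        simp only [hpar, hpar', if_true, if_false]
        apply Fin.ext
        simp [Fin.val_rev, hvala, hvalb]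
      · have hpar' : Even m' := by rw [hmm]; simpa [Int.even_add_one] using hpar
        simp only [hpar, hpar', if_true, if_false]
        apply Fin.ext
        simp [Fin.val_rev, hvala, hvalb]
        omega
    · left; omega

end NashW

namespace NashW

def Adj2 (x y : ℤ × ℤ) : Prop :=
  (x.2 = y.2 ∧ (y.1 = x.1 + 1 ∨ x.1 = y.1 + 1)) ∨
  (x.1 = y.1 ∧ (y.2 = x.2 + 1 ∨ x.2 = y.2 + 1))

def core (m j : ℕ) : ℤ × ℤ :=
  if j ≤ m then ((m:ℤ), (j:ℤ))
  else if j ≤ 3*m then (2*(m:ℤ) - (j:ℤ), (m:ℤ))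
  else (-(m:ℤ), 4*(m:ℤ) - (j:ℤ))

def mir (x : ℤ × ℤ) : ℤ × ℤ := (-x.1, x.2)

def ush (m j : ℕ) : ℤ × ℤ := if m % 2 = 0 then core m j else mir (core m j)

lemma mir_mir (x : ℤ × ℤ) : mir (mir x) = x := by simp [mir]

lemma core_inj {m j m' j' : ℕ} (hj : j ≤ 4*m) (hj' : j' ≤ 4*m')
    (h : core m j = core m' j') : m = m' ∧ j = j' := by
  unfold core at h
  split_ifs at h <;> rw [Prod.mk.injEq] at h <;> omega

lemma core_mir {m j m' j' : ℕ} (hj : j ≤ 4*m) (hj' : j' ≤ 4*m')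
    (h : core m j = mir (core m' j')) : m = m' := by
  unfold core mir at h
  split_ifs at h <;> simp only [Prod.mk.injEq] at h <;> omega

lemma ush_inj {m j m' j' : ℕ} (hj : j ≤ 4*m) (hj' : j' ≤ 4*m')
    (h : ush m j = ush m' j') : m = m' ∧ j = j' := by
  unfold ush at h
  by_cases hm : m % 2 = 0 <;> by_cases hm' : m' % 2 = 0
  · rw [if_pos hm, if_pos hm'] at h; exact core_inj hj hj' h
  · rw [if_pos hm, if_neg hm'] at h
    have := core_mir hj hj' h
    omega
  · rw [if_neg hm, if_pos hm'] at h
    have h2 : core m j = mir (core m' j') := by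
      rw [← h, mir_mir]
    have := core_mir hj hj' h2
    omega
  · rw [if_neg hm, if_neg hm'] at h
    have h2 : core m j = core m' j' := by
      have := congrArg mir h
      rwa [mir_mir, mir_mir] at this
    exact core_inj hj hj' h2

lemma core_snd_nonneg (m j : ℕ) (hj : j ≤ 4*m) : 0 ≤ (core m j).2 := by
  unfold core
  split_ifs <;> simp <;> omega

lemma ush_snd_nonneg (m j : ℕ) (hj : j ≤ 4*m) : 0 ≤ (ush m j).2 := by
  unfold ush
  split_ifs with h
  · exact core_snd_nonneg m j hj
  · exact core_snd_nonneg m j hj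

lemma core_surj {p i : ℤ} {m : ℕ} (hi : 0 ≤ i) (him : i ≤ m) (hpm : -(m:ℤ) ≤ p)
    (hpm' : p ≤ m) (hsh : p = m ∨ p = -(m:ℤ) ∨ i = m) :
    ∃ j, j ≤ 4*m ∧ core m j = (p, i) := by
  by_cases h1 : p = (m:ℤ)
  · refine ⟨i.toNat, by omega, ?_⟩
    unfold core
    rw [if_pos (by omega)]
    rw [Prod.mk.injEq]
    omega
  · by_cases h2 : i = (m:ℤ)
    · refine ⟨(2*(m:ℤ) - p).toNat, by omega, ?_⟩
      unfold core
      rw [if_neg (by omega), if_pos (by omega)]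
      rw [Prod.mk.injEq]
      omega
    · have h3 : p = -(m:ℤ) := by tauto
      refine ⟨(4*(m:ℤ) - i).toNat, by omega, ?_⟩
      unfold core
      rw [if_neg (by omega), if_neg (by omega)]
      rw [Prod.mk.injEq]
      omega

lemma ush_surj (p i : ℤ) (hi : 0 ≤ i) : ∃ m j, j ≤ 4*m ∧ ush m j = (p, i) := by
  set m : ℕ := max p.natAbs i.toNat with hm
  have h1 : -(m:ℤ) ≤ p := by omega
  have h2 : p ≤ m := by omega
  have h3 : i ≤ m := by omega
  have h4 : p = m ∨ p = -(m:ℤ) ∨ i = m := by omega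
  by_cases hpar : m % 2 = 0
  · obtain ⟨j, hj, hc⟩ := core_surj hi h3 h1 h2 h4
    exact ⟨m, j, hj, by rw [ush, if_pos hpar, hc]⟩
  · obtain ⟨j, hj, hc⟩ := core_surj (p := -p) hi h3 (by omega) (by omega) (by omega)
    refine ⟨m, j, hj, ?_⟩
    rw [ush, if_neg hpar, hc]
    simp [mir]

lemma adj2_mir {x y : ℤ × ℤ} (h : Adj2 x y) : Adj2 (mir x) (mir y) := by
  unfold Adj2 mir at *
  omega

lemma adj2_symm {x y : ℤ × ℤ} (h : Adj2 x y) : Adj2 y x := by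
  unfold Adj2 at *
  omega

lemma core_step {m j : ℕ} (hj : j < 4*m) : Adj2 (core m j) (core m (j+1)) := by
  unfold Adj2 core
  split_ifs <;> dsimp only <;> omega

lemma ush_step {m j : ℕ} (hj : j < 4*m) : Adj2 (ush m j) (ush m (j+1)) := by
  unfold ush
  split_ifs with h
  · exact core_step hj
  · exact adj2_mir (core_step hj)

lemma core_last (m : ℕ) : core m (4*m) = (-(m:ℤ), 0) := by
  unfold core
  split_ifs <;> rw [Prod.mk.injEq] <;> omega

lemma core_zero (m : ℕ) : core m 0 = ((m:ℤ), 0) := by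
  unfold core
  rw [if_pos (by omega), Prod.mk.injEq]
  omega

lemma ush_step2 (m : ℕ) : Adj2 (ush m (4*m)) (ush (m+1) 0) := by
  unfold ush
  by_cases h : m % 2 = 0
  · rw [if_pos h, if_neg (by omega), core_last, core_zero]
    unfold Adj2 mir
    simp
  · rw [if_neg h, if_pos (by omega), core_last, core_zero]
    unfold Adj2 mir
    simp

def sstart : ℕ → ℕ
  | 0 => 0
  | m+1 => sstart m + 4*m + 1

lemma sstart_succ (m : ℕ) : sstart (m+1) = sstart m + 4*m + 1 := rfl

lemma sstart_ge (m : ℕ) : m ≤ sstart m := by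
  induction m with
  | zero => simp [sstart]
  | succ n ih => rw [sstart_succ]; omega

lemma sstart_mono : Monotone sstart := by
  apply monotone_nat_of_le_succ
  intro n
  rw [sstart_succ]
  omega

lemma shell_exists (n : ℕ) : ∃ m, n < sstart (m+1) := ⟨n, by have := sstart_ge (n+1); omega⟩

def shell (n : ℕ) : ℕ := Nat.find (shell_exists n)

lemma shell_spec (n : ℕ) : sstart (shell n) ≤ n ∧ n < sstart (shell n + 1) := by
  refine ⟨?_, Nat.find_spec (shell_exists n)⟩
  rcases Nat.eq_zero_or_pos (shell n) with h | h
  · rw [h]; simp [sstart]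
  · have hlt : shell n - 1 < shell n := by omega
    have h2 := Nat.find_min (shell_exists n) hlt
    push_neg at h2
    have h3 : shell n - 1 + 1 = shell n := by omega
    rwa [h3] at h2

lemma shell_eq {n m : ℕ} (h1 : sstart m ≤ n) (h2 : n < sstart (m+1)) : shell n = m := by
  apply le_antisymm
  · exact Nat.find_min' (shell_exists n) h2
  · by_contra hc
    push_neg at hc
    have h3 : shell n + 1 ≤ m := by omega
    have := sstart_mono h3
    have := (shell_spec n).2
    omega

def U (n : ℕ) : ℤ × ℤ := ush (shell n) (n - sstart (shell n))

lemma U_j_le (n : ℕ) : n - sstart (shell n) ≤ 4 * shell n := by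
  have h := shell_spec n
  rw [sstart_succ] at h
  omega

lemma U_inj : Function.Injective U := by
  intro a b h
  unfold U at h
  obtain ⟨hm, hj⟩ := ush_inj (U_j_le a) (U_j_le b) h
  have ha := shell_spec a
  have hb := shell_spec b
  rw [hm] at ha hj
  omega

lemma U_surj (p i : ℤ) (hi : 0 ≤ i) : ∃ n, U n = (p, i) := by
  obtain ⟨m, j, hj, h⟩ := ush_surj p i hi
  refine ⟨sstart m + j, ?_⟩
  have hs : shell (sstart m + j) = m :=
    shell_eq (by omega) (by rw [sstart_succ]; omega)
  unfold U
  rw [hs]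
  have : sstart m + j - sstart m = j := by omega
  rw [this, h]

lemma U_snd_nonneg (n : ℕ) : 0 ≤ (U n).2 := ush_snd_nonneg _ _ (U_j_le n)

lemma U_adj (n : ℕ) : Adj2 (U n) (U (n+1)) := by
  have h := shell_spec n
  set m := shell n with hm
  by_cases hc : n + 1 < sstart (m + 1)
  · have hs : shell (n+1) = m := shell_eq (by omega) hc
    unfold U
    rw [hs, ← hm]
    have he : n + 1 - sstart m = (n - sstart m) + 1 := by omega
    rw [he]
    exact ush_step (by have := sstart_succ m; omega)
  · have hn1 : n + 1 = sstart (m+1) := by omega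
    have hs : shell (n+1) = m + 1 := by
      apply shell_eq (by omega)
      rw [sstart_succ (m+1)]
      omega
    unfold U
    rw [hs, ← hm]
    have he1 : n - sstart m = 4*m := by rw [sstart_succ] at hn1; omega
    have he2 : n + 1 - sstart (m+1) = 0 := by omega
    rw [he1, he2]
    exact ush_step2 m

def mirv (x : ℤ × ℤ) : ℤ × ℤ := (x.1, -1 - x.2)

lemma adj2_mirv {x y : ℤ × ℤ} (h : Adj2 x y) : Adj2 (mirv x) (mirv y) := by
  unfold Adj2 mirv at *
  omega

def spiralF (z : ℤ) : ℤ × ℤ :=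
  if 0 ≤ z then U z.toNat else mirv (U (-z-1).toNat)

lemma spiral_inj : Function.Injective spiralF := by
  intro a b h
  unfold spiralF at h
  split_ifs at h with ha hb hb
  · have := U_inj h
    omega
  · exfalso
    have h2 := congrArg Prod.snd h
    have n1 := U_snd_nonneg a.toNat
    have n2 := U_snd_nonneg (-b-1).toNat
    simp only [mirv] at h2
    omega
  · exfalso
    have h2 := congrArg Prod.snd h
    have n1 := U_snd_nonneg b.toNat
    have n2 := U_snd_nonneg (-a-1).toNat
    simp only [mirv] at h2
    omega
  · have h2 : U (-a-1).toNat = U (-b-1).toNat := by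
      have h1 := congrArg Prod.fst h
      have h3 := congrArg Prod.snd h
      simp only [mirv] at h1 h3
      exact Prod.ext h1 (by omega)
    have := U_inj h2
    omega

lemma spiral_surj : Function.Surjective spiralF := by
  rintro ⟨p, i⟩
  by_cases hi : 0 ≤ i
  · obtain ⟨n, hn⟩ := U_surj p i hi
    refine ⟨(n : ℤ), ?_⟩
    unfold spiralF
    rw [if_pos (by omega)]
    simpa using hn
  · obtain ⟨n, hn⟩ := U_surj p (-1 - i) (by omega)
    refine ⟨-(n:ℤ) - 1, ?_⟩
    unfold spiralF
    rw [if_neg (by omega)]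
    have : (-(-(n:ℤ) - 1) - 1).toNat = n := by omega
    rw [this, hn]
    simp only [mirv]
    rw [Prod.mk.injEq]
    omega

lemma spiral_step (z : ℤ) : Adj2 (spiralF z) (spiralF (z+1)) := by
  unfold spiralF
  by_cases h0 : 0 ≤ z
  · rw [if_pos h0, if_pos (by omega)]
    have : (z+1).toNat = z.toNat + 1 := by omega
    rw [this]
    exact U_adj z.toNat
  · by_cases h1 : z = -1
    · subst h1
      rw [if_neg (by omega), if_pos (by omega)]
      have hU0 : U 0 = (0, 0) := by
        have hs : shell 0 = 0 := shell_eq (by simp [sstart]) (by simp [sstart])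
        unfold U
        rw [hs]
        simp [sstart, ush, core]
      norm_num
      rw [hU0]
      unfold Adj2 mirv
      simp
    · rw [if_neg h0, if_neg (by omega)]
      have h2 : (-z-1).toNat = ((-(z+1)-1).toNat) + 1 := by omega
      rw [h2]
      exact adj2_symm (adj2_mirv (U_adj _))

lemma spiral_double_ray : ∃ E : ℤ ≃ ℤ × ℤ, ∀ n : ℤ, Adj2 (E n) (E (n+1)) := by
  refine ⟨Equiv.ofBijective spiralF ⟨spiral_inj, spiral_surj⟩, fun n => ?_⟩
  exact spiral_step n

end NashW

open Subgroup List

namespace NashW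

variable {Q : Type*} [CommGroup Q]

section FinHam

variable [Finite Q]

lemma finham_aux : ∀ (n : ℕ) (S : Set Q), S.ncard ≤ n → (∀ x ∈ S, x⁻¹ ∈ S) →
    ∃ l : List Q, l ≠ [] ∧ l.Nodup ∧ (∀ q : Q, q ∈ l ↔ q ∈ Subgroup.closure S) ∧
      l.Chain' (fun a b => a⁻¹ * b ∈ S) := by
  intro n
  induction n using Nat.strong_induction_on with
  | _ n IH =>
  intro S hcard hsymm
  classical
  rcases Set.eq_empty_or_nonempty S with rfl | ⟨t, ht⟩
  · refine ⟨[1], by simp, by simp, ?_, List.isChain_singleton _⟩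
    intro q
    simp [Subgroup.closure_empty, Subgroup.mem_bot]
  -- remove t and t⁻¹
  set S' : Set Q := S \ {t, t⁻¹} with hS'
  have hS'sub : S' ⊆ S := Set.diff_subset
  have hS'symm : ∀ x ∈ S', x⁻¹ ∈ S' := by
    rintro x ⟨hxS, hxn⟩
    refine ⟨hsymm x hxS, ?_⟩
    simp only [Set.mem_insert_iff, Set.mem_singleton_iff] at hxn ⊢
    push_neg at hxn ⊢
    constructor
    · intro h
      exact hxn.2 (by rw [← inv_inv x, h])
    · intro h
      exact hxn.1 (by rw [← inv_inv x, h, inv_inv])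
  have hS'lt : S'.ncard < S.ncard := by
    apply Set.ncard_lt_ncard _ (Set.toFinite S)
    constructor
    · exact hS'sub
    · intro hsub
      have := hsub ht
      simp [hS'] at this
  have hc1 : 1 ≤ S.ncard := by
    have : S.Nonempty := ⟨t, ht⟩
    have := Set.ncard_pos (Set.toFinite S)
    omega
  obtain ⟨l, hne, hnd, hmem, hch⟩ := IH S'.ncard (by omega) S' le_rfl hS'symm
  set H := Subgroup.closure S' with hH
  -- the minimal positive power of t lying in H
  have hfin : IsOfFinOrder t := isOfFinOrder_of_finite t
  have hex : ∃ k : ℕ, 0 < k ∧ t ^ k ∈ H :=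
    ⟨orderOf t, hfin.orderOf_pos, by rw [pow_orderOf_eq_one]; exact one_mem H⟩
  set m := Nat.find hex with hm
  obtain ⟨hmpos, hmH⟩ := Nat.find_spec hex
  have hmin : ∀ k, 0 < k → k < m → t ^ k ∉ H := by
    intro k hk hkm hkH
    exact Nat.find_min hex hkm ⟨hk, hkH⟩
  -- segments
  set seg : ℕ → List Q := fun i => (if i % 2 = 0 then l else l.reverse).map (fun a => t^i * a)
    with hseg
  set big : ℕ → List Q := fun i => Nat.rec [] (fun i ih => ih ++ seg i) i with hbig
  have hbig_succ : ∀ i, big (i+1) = big i ++ seg i := fun i => rfl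
  have hmem_seg : ∀ i q, q ∈ seg i ↔ ∃ a, a ∈ H ∧ q = t^i * a := by
    intro i q
    rw [hseg]
    simp only [List.mem_map]
    constructor
    · rintro ⟨a, ha, rfl⟩
      refine ⟨a, ?_, rfl⟩
      rw [← hmem]
      by_cases h : i % 2 = 0
      · rwa [if_pos h] at ha
      · rw [if_neg h] at ha; exact List.mem_reverse.1 ha
    · rintro ⟨a, ha, rfl⟩
      refine ⟨a, ?_, rfl⟩
      rw [← hmem] at ha
      by_cases h : i % 2 = 0
      · rwa [if_pos h]
      · rw [if_neg h]; exact List.mem_reverse.2 ha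
  have hmem_big : ∀ i q, q ∈ big i ↔ ∃ k, k < i ∧ ∃ a ∈ H, q = t^k * a := by
    intro i
    induction i with
    | zero => intro q; constructor
              · intro h; exact absurd h (by simp [hbig])
              · rintro ⟨k, hk, _⟩; omega
    | succ i ih =>
      intro q
      rw [hbig_succ, List.mem_append, ih, hmem_seg]
      constructor
      · rintro (⟨k, hk, a, ha, rfl⟩ | ⟨a, ha, rfl⟩)
        · exact ⟨k, by omega, a, ha, rfl⟩
        · exact ⟨i, by omega, a, ha, rfl⟩
      · rintro ⟨k, hk, a, ha, rfl⟩
        by_cases h : k < i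
        · exact Or.inl ⟨k, h, a, ha, rfl⟩
        · have : k = i := by omega
          subst this
          exact Or.inr ⟨a, ha, rfl⟩
  -- distinctness of cosets
  have hcoset : ∀ k k' (a a' : Q), a ∈ H → a' ∈ H → k < m → k' < m →
      t^k * a = t^k' * a' → k = k' ∧ a = a' := by
    intro k k' a a' ha ha' hk hk' heq
    rcases Nat.lt_trichotomy k k' with h | h | h
    · exfalso
      have : t ^ (k' - k) = a * a'⁻¹ := by
        have h2 : t ^ k' = t ^ k * t ^ (k' - k) := by
          rw [← pow_add]
          congr 1
          omega
        rw [h2] at heq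
        have h3 : a = t ^ (k' - k) * a' := by
          rw [mul_assoc] at heq
          exact mul_left_cancel heq
        rw [h3]
        group
      have : t ^ (k' - k) ∈ H := by
        rw [this]; exact mul_mem ha (inv_mem ha')
      exact hmin (k' - k) (by omega) (by omega) this
    · refine ⟨h, ?_⟩
      subst h
      exact mul_left_cancel heq
    · exfalso
      have : t ^ (k - k') = a' * a⁻¹ := by
        have h2 : t ^ k = t ^ k' * t ^ (k - k') := by
          rw [← pow_add]
          congr 1
          omega
        rw [h2] at heq
        have h3 : t ^ (k - k') * a = a' := by
          rw [mul_assoc] at heq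
          exact mul_left_cancel heq
        rw [← h3]
        group
      have : t ^ (k - k') ∈ H := by
        rw [this]; exact mul_mem ha' (inv_mem ha)
      exact hmin (k - k') (by omega) (by omega) this
  -- nodup
  have hnd_seg : ∀ i, (seg i).Nodup := by
    intro i
    rw [hseg]
    apply List.Nodup.map
    · intro a b hab
      exact mul_left_cancel hab
    · by_cases h : i % 2 = 0
      · rwa [if_pos h]
      · rw [if_neg h]; exact List.nodup_reverse.2 hnd
  have hnd_big : ∀ i, i ≤ m → (big i).Nodup := by
    intro i
    induction i with
    | zero => intro _; simp [hbig]
    | succ i ih =>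
      intro hi
      rw [hbig_succ]
      apply List.Nodup.append (ih (by omega)) (hnd_seg i)
      intro q hq1 hq2
      rw [hmem_big] at hq1
      rw [hmem_seg] at hq2
      obtain ⟨k, hk, a, ha, rfl⟩ := hq1
      obtain ⟨a', ha', heq⟩ := hq2
      obtain ⟨hkk, -⟩ := hcoset k i a a' ha ha' (by omega) (by omega) heq
      omega
  -- endpoints
  set xi : ℕ → Q := fun i => if i % 2 = 0 then l.getLast hne else l.head hne with hxi
  have hseg_ne : ∀ i, seg i ≠ [] := by
    intro i
    rw [hseg]
    simp only [ne_eq, List.map_eq_nil_iff]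
    by_cases h : i % 2 = 0
    · rw [if_pos h]; exact hne
    · rw [if_neg h]; simp [hne]
  have hlast_seg : ∀ i, (seg i).getLast? = some (t^i * xi i) := by
    intro i
    rw [hseg]
    dsimp only
    rw [List.getLast?_map]
    by_cases h : i % 2 = 0
    · rw [if_pos h, List.getLast?_eq_getLast hne, hxi]
      simp [h]
    · rw [if_neg h, List.getLast?_reverse, List.head?_eq_head hne, hxi]
      simp [h]
  have hhead_seg : ∀ i, (seg i).head? = some (t^i * xi (i+1)) := by
    intro i
    rw [hseg]
    dsimp only
    rw [List.head?_map]
    by_cases h : i % 2 = 0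
    · rw [if_pos h, List.head?_eq_head hne, hxi]
      have h2 : ¬ ((i+1) % 2 = 0) := by omega
      simp [h2]
    · rw [if_neg h, List.head?_reverse, List.getLast?_eq_getLast hne, hxi]
      have h2 : (i+1) % 2 = 0 := by omega
      simp [h2]
  have hch_seg : ∀ i, (seg i).Chain' (fun a b => a⁻¹ * b ∈ S) := by
    intro i
    rw [hseg]
    dsimp only
    rw [List.Chain', List.isChain_map]
    have hred : ∀ a b : Q, (t^i*a)⁻¹ * (t^i*b) = a⁻¹ * b := by
      intro a b
      simp [mul_inv_rev, mul_comm, mul_left_comm, mul_assoc]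
    by_cases h : i % 2 = 0
    · rw [if_pos h]
      apply hch.imp
      intro a b hab
      rw [hred]
      exact hS'sub hab
    · rw [if_neg h, List.isChain_reverse]
      apply hch.imp
      intro a b hab
      show (t^i*b)⁻¹ * (t^i*a) ∈ S
      rw [hred]
      have h2 := hS'symm _ hab
      rw [mul_inv_rev, inv_inv] at h2
      exact hS'sub h2
  have hch_big : ∀ i, (big i).Chain' (fun a b => a⁻¹ * b ∈ S) ∧
      (1 ≤ i → (big i).getLast? = some (t^(i-1) * xi (i-1))) := by
    intro i
    induction i with
    | zero => exact ⟨by simp [hbig]; exact List.isChain_nil, by omega⟩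
    | succ i ih =>
      constructor
      · rw [hbig_succ, List.Chain', List.isChain_append]
        refine ⟨ih.1, hch_seg i, ?_⟩
        intro x hx y hy
        rcases Nat.eq_zero_or_pos i with rfl | hipos
        · simp [hbig] at hx
        · rw [ih.2 hipos] at hx
          rw [hhead_seg i] at hy
          simp only [Option.mem_def, Option.some.injEq] at hx hy
          subst hx
          subst hy
          have hxi_eq : xi (i-1) = xi (i+1) := by
            rw [hxi]
            have : (i-1) % 2 = (i+1) % 2 := by omega
            simp only [this]
          rw [← hxi_eq]
          have hpow : t^i = t^(i-1) * t := by
            rw [← pow_succ]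
            congr 1
            omega
          rw [hpow]
          have : (t^(i-1) * xi (i-1))⁻¹ * (t^(i-1) * t * xi (i-1)) = t := by
            simp [mul_inv_rev, mul_comm, mul_left_comm, mul_assoc]
          rw [this]
          exact ht
      · intro _
        rw [hbig_succ, List.getLast?_append_of_ne_nil _ (hseg_ne i), hlast_seg i]
        simp
  -- the closure identity
  have hcl : Subgroup.closure S = Subgroup.zpowers t ⊔ H := by
    apply _root_.le_antisymm
    · rw [Subgroup.closure_le]
      intro x hx
      by_cases h1 : x = t
      · subst h1
        exact SetLike.le_def.1 le_sup_left (Subgroup.mem_zpowers x)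
      · by_cases h2 : x = t⁻¹
        · subst h2
          exact SetLike.le_def.1 le_sup_left (inv_mem (Subgroup.mem_zpowers t))
        · have : x ∈ S' := by
            rw [hS']
            refine ⟨hx, ?_⟩
            simp only [Set.mem_insert_iff, Set.mem_singleton_iff]
            push_neg
            exact ⟨h1, h2⟩
          exact SetLike.le_def.1 le_sup_right (Subgroup.subset_closure this)
    · apply sup_le
      · rw [Subgroup.zpowers_le]
        exact Subgroup.subset_closure ht
      · rw [hH]
        exact Subgroup.closure_mono hS'sub
  have hmem_final : ∀ q : Q, q ∈ big m ↔ q ∈ Subgroup.closure S := by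
    intro q
    rw [hmem_big, hcl]
    constructor
    · rintro ⟨k, hk, a, ha, rfl⟩
      apply mul_mem
      · exact SetLike.le_def.1 le_sup_left (pow_mem (Subgroup.mem_zpowers t) k)
      · exact SetLike.le_def.1 le_sup_right ha
    · intro hq
      rw [Subgroup.mem_sup] at hq
      obtain ⟨y, hy, z, hz, rfl⟩ := hq
      obtain ⟨c, rfl⟩ := hy
      -- reduce the exponent mod m
      have hm0 : (m:ℤ) ≠ 0 := by exact_mod_cast Nat.pos_iff_ne_zero.1 hmpos
      set r := c % (m:ℤ) with hr
      set d := c / (m:ℤ) with hd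
      have hc : (m:ℤ) * d + r = c := Int.mul_ediv_add_emod c (m:ℤ)
      have hr0 : 0 ≤ r := Int.emod_nonneg c hm0
      have hrm : r < (m:ℤ) := Int.emod_lt_of_pos c (by exact_mod_cast hmpos)
      have hrr : t ^ r = t ^ (r.toNat) := by
        conv_lhs => rw [← Int.toNat_of_nonneg hr0]
        rw [zpow_natCast]
      have hsplit : t ^ c = t ^ (r.toNat) * (t ^ m) ^ d := by
        rw [← hc, zpow_add, zpow_mul, zpow_natCast, hrr, mul_comm]
      refine ⟨r.toNat, by omega, (t ^ m) ^ d * z, ?_, ?_⟩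
      · exact mul_mem (zpow_mem hmH d) hz
      · show t ^ c * z = t ^ r.toNat * ((t ^ m) ^ d * z)
        rw [hsplit, mul_assoc]
  have hbigne : big m ≠ [] := by
    apply List.ne_nil_of_mem (a := t^0 * 1)
    rw [hmem_big]
    exact ⟨0, hmpos, 1, one_mem H, rfl⟩
  exact ⟨big m, hbigne, hnd_big m le_rfl, hmem_final, (hch_big m).1⟩

end FinHam

end NashW

open Subgroup

namespace NashW

universe u

lemma exists_nontorsion {Γ : Type u} [CommGroup Γ] [Infinite Γ] (S : Set Γ) (hfin : S.Finite)
    (hgen : Subgroup.closure S = ⊤) : ∃ s ∈ S, ¬ IsOfFinOrder s := by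
  by_contra hc
  push_neg at hc
  have hT : Monoid.IsTorsion Γ := by
    intro g
    have hg : g ∈ Subgroup.closure S := by rw [hgen]; trivial
    have hle : Subgroup.closure S ≤ CommGroup.torsion Γ := by
      rw [Subgroup.closure_le]
      intro x hx
      rw [SetLike.mem_coe, CommGroup.mem_torsion]
      exact hc x hx
    rw [← CommGroup.mem_torsion]
    exact hle hg
  haveI hFG : Group.FG Γ := ⟨⟨hfin.toFinset, by rwa [Set.Finite.coe_toFinset]⟩⟩
  haveI : Finite Γ := CommGroup.finite_of_fg_torsion Γ hT
  exact not_finite Γ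

lemma rank_fin {Γ : Type u} [CommGroup Γ] (S : Set Γ) (hfin : S.Finite)
    (hgen : Subgroup.closure S = ⊤) : ∃ n : ℕ, Module.rank ℤ (Additive Γ) ≤ n := by
  have hFG : Group.FG Γ := ⟨⟨hfin.toFinset, by rwa [Set.Finite.coe_toFinset]⟩⟩
  have hAFG : AddGroup.FG (Additive Γ) := GroupFG.iff_add_fg.1 hFG
  have hMF : Module.Finite ℤ (Additive Γ) := Module.Finite.iff_addGroup_fg.2 hAFG
  have := Module.rank_lt_aleph0 ℤ (Additive Γ)
  obtain ⟨n, hn⟩ := Cardinal.lt_aleph0.1 this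
  exact ⟨n, le_of_eq hn⟩

lemma zsmul_ofMul_eq_zero {Γ : Type u} [CommGroup Γ] {s : Γ} (hs : ¬ IsOfFinOrder s)
    {c : ℤ} (h : c • Additive.ofMul s = 0) : c = 0 := by
  have h2 : s ^ c = 1 := by
    have := congrArg Additive.toMul h
    simpa using this
  have hinj := injective_zpow_iff_not_isOfFinOrder.2 hs
  have : s ^ c = s ^ (0:ℤ) := by simpa using h2
  exact hinj this

lemma rank_pos_of_nontorsion {Γ : Type u} [CommGroup Γ] {s : Γ} (hs : ¬ IsOfFinOrder s) :
    (1 : Cardinal) ≤ Module.rank ℤ (Additive Γ) := by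
  have h : LinearIndependent ℤ (fun _ : PUnit.{u+1} => Additive.ofMul s) := by
    rw [linearIndependent_iff']
    intro u g hsum i hi
    have hu : u = {i} := Finset.eq_singleton_iff_unique_mem.2 ⟨hi, fun j _ => Subsingleton.elim j i⟩
    rw [hu, Finset.sum_singleton] at hsum
    exact zsmul_ofMul_eq_zero hs hsum
  have := h.cardinal_le_rank
  simpa using this

lemma rank_drop {Γ : Type u} [CommGroup Γ] {s : Γ} (hs : ¬ IsOfFinOrder s) {n : ℕ}
    (h : Module.rank ℤ (Additive Γ) ≤ (n+1 : ℕ)) :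
    Module.rank ℤ (Additive (Γ ⧸ Subgroup.zpowers s)) ≤ n := by
  classical
  apply rank_le
  intro fs hfs
  set π : Additive Γ →+ Additive (Γ ⧸ Subgroup.zpowers s) :=
    MonoidHom.toAdditive (QuotientGroup.mk' (Subgroup.zpowers s)) with hπ
  set πₗ : Additive Γ →ₗ[ℤ] Additive (Γ ⧸ Subgroup.zpowers s) := π.toIntLinearMap with hπₗ
  -- lifts
  have hlift : ∀ i : fs, ∃ x : Additive Γ, πₗ x = (i : Additive (Γ ⧸ Subgroup.zpowers s)) := by
    intro i
    obtain ⟨y, hy⟩ := QuotientGroup.mk'_surjective (Subgroup.zpowers s)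
      (Additive.toMul (i : Additive (Γ ⧸ Subgroup.zpowers s)))
    exact ⟨Additive.ofMul y, by simp [hπₗ, hπ, hy]⟩
  choose w hw using hlift
  set W : Option fs → Additive Γ := fun o => o.elim (Additive.ofMul s) w with hW
  have hπW0 : πₗ (W none) = 0 := by
    show πₗ (Additive.ofMul s) = 0
    have : (QuotientGroup.mk' (Subgroup.zpowers s)) s = 1 :=
      (QuotientGroup.eq_one_iff _).2 (Subgroup.mem_zpowers s)
    simp [hπₗ, hπ, this]
  have hWind : LinearIndependent ℤ W := by
    rw [linearIndependent_iff']
    intro u g hsum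
    have hzero : ∀ i ∈ u.eraseNone, g (some i) = 0 := by
      have hπsum : ∑ i ∈ u.eraseNone, g (some i) • (i : Additive (Γ ⧸ Subgroup.zpowers s)) = 0 := by
        rw [Finset.sum_eraseNone]
        have h2 := congrArg πₗ hsum
        rw [map_sum, map_zero] at h2
        simp only [map_zsmul] at h2
        refine Eq.trans ?_ h2
        apply Finset.sum_congr rfl
        intro o _
        cases o with
        | none => simp [hπW0]
        | some i => simp [hW, hw]
      exact linearIndependent_iff'.1 hfs u.eraseNone (fun i => g (some i)) hπsum
    have hnone : none ∈ u → g none = 0 := by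
      intro hu
      have h1 : g none • W none + ∑ o ∈ u.erase none, g o • W o = ∑ o ∈ u, g o • W o :=
        Finset.add_sum_erase u (fun o => g o • W o) hu
      have h2 : ∑ o ∈ u.erase none, g o • W o = 0 := by
        apply Finset.sum_eq_zero
        intro o ho
        have hone := Finset.ne_of_mem_erase ho
        cases o with
        | none => exact absurd rfl hone
        | some i =>
          have : i ∈ u.eraseNone := Finset.mem_eraseNone.2 (Finset.mem_of_mem_erase ho)
          rw [hzero i this, zero_smul]
      rw [hsum] at h1
      rw [h2, add_zero] at h1
      exact zsmul_ofMul_eq_zero hs h1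
    intro o ho
    cases o with
    | none => exact hnone ho
    | some i => exact hzero i (Finset.mem_eraseNone.2 ho)
  have hcard := hWind.cardinal_le_rank
  have hmk : (Cardinal.mk (Option fs)) = (fs.card : Cardinal) + 1 := by
    rw [Cardinal.mk_option, Cardinal.mk_coe_finset]
  rw [hmk] at hcard
  have h' : Module.rank ℤ (Additive Γ) ≤ (n : Cardinal) + 1 := by
    refine h.trans ?_
    push_cast
    exact le_rfl
  have hle : ((fs.card + 1 : ℕ) : Cardinal) ≤ ((n + 1 : ℕ) : Cardinal) := by
    push_cast
    exact hcard.trans h'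
  have := Nat.cast_le.1 hle
  omega

end NashW

open Subgroup

namespace NashW

universe u

lemma ham_seq : ∀ (n : ℕ) (Γ : Type u) [CommGroup Γ] [Infinite Γ] (S : Set Γ),
    S.Finite → (∀ x ∈ S, x⁻¹ ∈ S) → Subgroup.closure S = ⊤ →
    Module.rank ℤ (Additive Γ) ≤ n →
    ∃ f : ℤ ≃ Γ, ∀ k : ℤ, (f k)⁻¹ * f (k+1) ∈ S := by
  intro n
  induction n with
  | zero =>
    intro Γ _ _ S hfin hsymm hgen hrank
    obtain ⟨s, hsS, hs⟩ := exists_nontorsion S hfin hgen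
    have h1 := (rank_pos_of_nontorsion hs).trans hrank
    simp at h1
  | succ n IH =>
    intro Γ _ _ S hfin hsymm hgen hrank
    obtain ⟨s, hsS, hs⟩ := exists_nontorsion S hfin hgen
    set K := Subgroup.zpowers s with hK
    set π := QuotientGroup.mk' K with hπdef
    have hπsurj : Function.Surjective π := QuotientGroup.mk'_surjective K
    set Sb : Set (Γ ⧸ K) := π '' S with hSbdef
    have hSbsymm : ∀ x ∈ Sb, x⁻¹ ∈ Sb := by
      rintro x ⟨y, hy, rfl⟩
      exact ⟨y⁻¹, hsymm y hy, map_inv π y⟩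
    have hSbgen : Subgroup.closure Sb = ⊤ := by
      rw [hSbdef, ← MonoidHom.map_closure, hgen]
      exact Subgroup.map_top_of_surjective π hπsurj
    rcases finite_or_infinite (Γ ⧸ K) with hQfin | hQinf
    · -- CASE A : finite quotient
      obtain ⟨l, hlne, hlnd, hlmem, hlch⟩ := finham_aux Sb.ncard Sb le_rfl hSbsymm
      have hlall : ∀ q : Γ ⧸ K, q ∈ l := fun q => (hlmem q).2 (by rw [hSbgen]; trivial)
      have hkpos : 0 < l.length := List.length_pos_iff.2 hlne
      haveI : NeZero l.length := ⟨by omega⟩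
      have hqbij : Function.Bijective l.get :=
        ⟨List.nodup_iff_injective_get.1 hlnd, fun y => List.mem_iff_get.1 (hlall y)⟩
      have hstep : ∀ i : ℕ, ∃ τ, τ ∈ S ∧ (∀ h : i + 1 < l.length,
          π τ = (l.get ⟨i, by omega⟩)⁻¹ * l.get ⟨i+1, h⟩) := by
        intro i
        by_cases hi : i + 1 < l.length
        · have hc := List.isChain_iff_getElem.1 hlch i (by omega)
          rw [hSbdef] at hc
          obtain ⟨τ, hτS, hτ⟩ := hc
          exact ⟨τ, hτS, fun h => hτ⟩
        · exact ⟨s, hsS, fun h => absurd h hi⟩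
      choose T hTS hTspec using hstep
      obtain ⟨g0, hg0⟩ := hπsurj (l.get ⟨0, hkpos⟩)
      set gg : ℕ → Γ := fun i => g0 * ∏ j ∈ Finset.range i, T j with hggdef
      have hgsucc : ∀ i, gg (i+1) = gg i * T i := by
        intro i
        rw [hggdef]
        dsimp only
        rw [Finset.prod_range_succ, mul_assoc]
      have hgg : ∀ i : ℕ, ∀ h : i < l.length, π (gg i) = l.get ⟨i, h⟩ := by
        intro i
        induction i with
        | zero => intro h; simpa [hggdef] using hg0
        | succ i ih =>
          intro h
          rw [hgsucc, map_mul, ih (by omega), hTspec i h, mul_inv_cancel_left]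
      set G : Fin l.length → Γ := fun i => gg i.val with hGdef
      have hGbij : Function.Bijective (fun i => π (G i)) := by
        have : (fun i : Fin l.length => π (G i)) = l.get := by
          funext i
          exact hgg i.val i.isLt
        rw [this]
        exact hqbij
      obtain ⟨E, hE⟩ := strip_double_ray l.length
      apply glue S hsS hsymm hs G hGbij E
      intro z
      rcases hE z with h | ⟨h1, h2 | h2⟩
      · exact Or.inl h
      · refine Or.inr ⟨h1, ?_⟩
        have hlt : (E z).2.val + 1 < l.length := by rw [h2]; exact (E (z+1)).2.isLt
        have : G (E (z+1)).2 = gg ((E z).2.val + 1) := by rw [hGdef]; dsimp only; rw [← h2]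
        rw [this, hGdef]
        dsimp only
        rw [hgsucc, inv_mul_cancel_left]
        exact hTS _
      · refine Or.inr ⟨h1, ?_⟩
        have : G (E z).2 = gg ((E (z+1)).2.val + 1) := by rw [hGdef]; dsimp only; rw [← h2]
        rw [this, hGdef]
        dsimp only
        rw [hgsucc, mul_inv_rev, inv_mul_cancel_right]
        exact hsymm _ (hTS _)
    · -- CASE B : infinite quotient
      have hrankQ : Module.rank ℤ (Additive (Γ ⧸ K)) ≤ n := rank_drop hs hrank
      obtain ⟨fQ, hfQ⟩ := IH (Γ ⧸ K) Sb (hfin.image π) hSbsymm hSbgen hrankQ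
      have hstep : ∀ z : ℤ, ∃ τ, τ ∈ S ∧ π τ = (fQ z)⁻¹ * fQ (z+1) := by
        intro z
        have := hfQ z
        rw [hSbdef] at this
        obtain ⟨τ, hτS, hτ⟩ := this
        exact ⟨τ, hτS, hτ⟩
      choose T hTS hTspec using hstep
      set D : ℤ → Γ := fun z => if 0 ≤ z then ∏ j ∈ Finset.range z.toNat, T (j : ℤ)
        else (∏ j ∈ Finset.range (-z).toNat, T (z + (j : ℤ)))⁻¹ with hDdef
      have hD : ∀ z : ℤ, D (z+1) = D z * T z := by
        intro z
        rw [hDdef]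
        dsimp only
        by_cases h0 : 0 ≤ z
        · rw [if_pos (by omega), if_pos h0]
          have h1 : (z+1).toNat = z.toNat + 1 := by omega
          rw [h1, Finset.prod_range_succ]
          congr 2
          omega
        · by_cases h1 : z = -1
          · subst h1
            have e1 : ((-1:ℤ)+1) = 0 := by ring
            rw [e1, if_pos le_rfl, if_neg (by omega)]
            simp [Finset.prod_range_one]
          · rw [if_neg (by omega), if_neg (by omega)]
            have hN : (-z).toNat = (-(z+1)).toNat + 1 := by omega
            rw [hN, Finset.prod_range_succ']
            have hrw : ∀ j ∈ Finset.range ((-(z+1)).toNat),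
                T (z + ((j+1 : ℕ) : ℤ)) = T ((z+1) + (j:ℤ)) := by
              intro j _
              congr 1
              push_cast
              ring
            rw [Finset.prod_congr rfl hrw]
            simp only [Nat.cast_zero, add_zero]
            simp [mul_inv_rev, mul_comm, mul_left_comm, mul_assoc]
      obtain ⟨g0, hg0⟩ := hπsurj (fQ 0)
      set gB : ℤ → Γ := fun z => g0 * D z with hgBdef
      have hgBsucc : ∀ z, gB (z+1) = gB z * T z := by
        intro z
        rw [hgBdef]
        dsimp only
        rw [hD, mul_assoc]
      have hπgB : ∀ z, π (gB z) = fQ z := by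
        intro z
        induction z using Int.induction_on with
        | zero =>
          rw [hgBdef]
          dsimp only
          rw [hDdef]
          norm_num
          exact hg0
        | succ i ih =>
          rw [hgBsucc, map_mul, ih, hTspec, mul_inv_cancel_left]
        | pred i ih =>
          have hstep2 := hgBsucc (-(i:ℤ)-1)
          have he : (-(i:ℤ)-1) + 1 = -(i:ℤ) := by ring
          rw [he] at hstep2
          have h2 : fQ (-(i:ℤ)) = π (gB (-(i:ℤ)-1)) * ((fQ (-(i:ℤ)-1))⁻¹ * fQ (-(i:ℤ)-1+1)) := by
            rw [← ih, hstep2, map_mul, hTspec]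
          rw [he] at h2
          have h3 : π (gB (-(i:ℤ)-1)) = fQ (-(i:ℤ)) * ((fQ (-(i:ℤ)-1))⁻¹ * fQ (-(i:ℤ)))⁻¹ :=
            eq_mul_inv_of_mul_eq h2.symm
          rw [h3, mul_inv_rev, inv_inv, ← mul_assoc, mul_inv_cancel, one_mul]
      have hGbij : Function.Bijective (fun z : ℤ => π (gB z)) := by
        have : (fun z : ℤ => π (gB z)) = fQ := funext hπgB
        rw [this]
        exact fQ.bijective
      obtain ⟨E, hE⟩ := spiral_double_ray
      apply glue S hsS hsymm hs gB hGbij E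
      intro z
      rcases hE z with h | ⟨h1, h2 | h2⟩
      · exact Or.inl h
      · refine Or.inr ⟨h1, ?_⟩
        rw [h2, hgBsucc, inv_mul_cancel_left]
        exact hTS _
      · refine Or.inr ⟨h1, ?_⟩
        rw [h2, hgBsucc, mul_inv_rev, inv_mul_cancel_right]
        exact hsymm _ (hTS _)

end NashW


/-- The Cayley graph of a group `Γ` with respect to a symmetric set `S` of generators
not containing the identity: `g` is adjacent to `h` iff `g⁻¹ * h ∈ S`. -/
def cayleyGraph {Γ : Type*} [Group Γ] (S : Set Γ) (hsymm : ∀ s ∈ S, s⁻¹ ∈ S)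
    (hone : (1 : Γ) ∉ S) : SimpleGraph Γ where
  Adj g h := g⁻¹ * h ∈ S
  symm := by
    constructor
    intro g h hgh
    have := hsymm _ hgh
    rwa [mul_inv_rev, inv_inv] at this
  loopless := by
    constructor
    intro g h
    rw [inv_mul_cancel] at h
    exact hone h

/-- Every connected locally finite Cayley graph of an infinite abelian group contains a
spanning double ray: a spanning subgraph which is connected and in which every vertex
has degree exactly 2. -/
theorem spanning_double_ray_of_abelian_cayleyGraph
    {Γ : Type*} [CommGroup Γ] [Infinite Γ] (S : Set Γ) (hfin : S.Finite)
    (hsymm : ∀ s ∈ S, s⁻¹ ∈ S) (hone : (1 : Γ) ∉ S)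
    (hgen : Subgroup.closure S = ⊤) :
    ∃ H : SimpleGraph Γ, H ≤ cayleyGraph S hsymm hone ∧ H.Connected ∧
      ∀ v : Γ, (H.neighborSet v).ncard = 2 := by
  classical
  obtain ⟨n, hn⟩ := NashW.rank_fin S hfin hgen
  obtain ⟨f, hf⟩ := NashW.ham_seq n Γ S hfin hsymm hgen hn
  set H : SimpleGraph Γ :=
    { Adj := fun a b => f.symm b = f.symm a + 1 ∨ f.symm a = f.symm b + 1,
      symm := by
        constructor
        intro a b h
        rcases h with h | h
        · exact Or.inr h
        · exact Or.inl h
      loopless := by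
        constructor
        intro a h
        rcases h with h | h <;> omega } with hH
  have hAdj : ∀ a b : Γ, H.Adj a b ↔
      (f.symm b = f.symm a + 1 ∨ f.symm a = f.symm b + 1) := fun _ _ => Iff.rfl
  refine ⟨H, ?_, ?_, ?_⟩
  · -- subgraph of the Cayley graph
    intro a b hab
    show a⁻¹ * b ∈ S
    rw [hAdj] at hab
    rcases hab with h | h
    · set m := f.symm a with hm
      have h1 : b = f (m + 1) := by rw [← h, f.apply_symm_apply]
      have h2 : a = f m := by rw [hm, f.apply_symm_apply]
      rw [h1, h2]
      exact hf m
    · set m := f.symm b with hm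
      have h1 : a = f (m + 1) := by rw [← h, f.apply_symm_apply]
      have h2 : b = f m := by rw [hm, f.apply_symm_apply]
      rw [h1, h2]
      have := hsymm _ (hf m)
      rwa [mul_inv_rev, inv_inv] at this
  · -- connected
    rw [SimpleGraph.connected_iff]
    refine ⟨?_, ⟨1⟩⟩
    have key : ∀ z : ℤ, H.Reachable (f 0) (f z) := by
      intro z
      induction z using Int.induction_on with
      | zero => exact SimpleGraph.Reachable.refl _
      | succ i ih =>
        refine ih.trans (SimpleGraph.Adj.reachable ?_)
        rw [hAdj]
        left
        simp only [Equiv.symm_apply_apply]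
      | pred i ih =>
        refine ih.trans (SimpleGraph.Adj.reachable ?_)
        rw [hAdj]
        right
        simp only [Equiv.symm_apply_apply]
        omega
    intro a b
    have ha := key (f.symm a)
    have hb := key (f.symm b)
    rw [f.apply_symm_apply] at ha hb
    exact ha.symm.trans hb
  · -- degree two
    intro v
    have hset : H.neighborSet v = {f (f.symm v + 1), f (f.symm v - 1)} := by
      ext u
      simp only [SimpleGraph.mem_neighborSet, Set.mem_insert_iff, Set.mem_singleton_iff]
      constructor
      · rintro (h | h)
        · left
          rw [← h, f.apply_symm_apply]
        · right
          have h2 : f.symm v - 1 = f.symm u := by omega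
          rw [h2, f.apply_symm_apply]
      · rintro (rfl | rfl)
        · left
          simp only [Equiv.symm_apply_apply]
        · right
          simp only [Equiv.symm_apply_apply]
          omega
    rw [hset, Set.ncard_pair]
    intro hc
    have := f.symm_apply_apply (f.symm v + 1)
    rw [hc] at this
    simp at this
    omega
end

section
/- Let T be a finite tree with at least two vertices and let v be a vertex of T. Then the third power T³ contains a Hamiltonian path one of whose endpoints is v and whose other endpoint is a neighbour of v in T. -/
/-!
Deleting an edge `vw` of a tree `T` leaves two subtrees, `A ∋ v` and `B ∋ w`. Prove the stronger
claim that for every root `v`, `T³` has a Hamiltonian path from `v` to a vertex at distance at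
most 1 from `v`, by induction on the number of vertices; the endpoint is `v` itself only in the
one-vertex tree. Induction gives Hamiltonian paths `v ⇝ x` in `A³` and `w ⇝ y` in `B³`, and
`d(x, y) ≤ d(x, v) + d(v, w) + d(w, y) ≤ 3`, so `v ⇝ x, y ⇝ w` is a Hamiltonian path of `T³`
ending at the neighbour `w` of `v`.
-/

/-- The `k`-th power of a graph `G`: same vertex set, and distinct vertices are adjacent
iff their graph distance in `G` is at most `k`. -/
def graphPow {V : Type*} (G : SimpleGraph V) (k : ℕ) : SimpleGraph V where
  Adj u v := u ≠ v ∧ G.edist u v ≤ k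
  symm := by
    constructor
    intro u v h
    exact ⟨h.1.symm, by rw [SimpleGraph.edist_comm]; exact h.2⟩
  loopless := ⟨fun u h => h.1 rfl⟩

open Function

namespace SimpleGraph

variable {V W : Type*} {G : SimpleGraph V} {H : SimpleGraph W}

theorem Hom.edist_le (f : G →g H) (u v : V) : H.edist (f u) (f v) ≤ G.edist u v := by
  rcases eq_or_ne (G.edist u v) ⊤ with h | h
  · simp [h]
  · obtain ⟨p, hp⟩ := exists_walk_of_edist_ne_top h
    rw [← hp, ← p.length_map f]
    exact SimpleGraph.edist_le _

def Hom.graphPow (f : G →g H) (hf : Injective f) (k : ℕ) : graphPow G k →g graphPow H k where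
  toFun := f
  map_rel' {u v} huv := ⟨hf.ne huv.1, (f.edist_le u v).trans huv.2⟩

theorem Walk.reachable_deleteEdges_or {u v a b : V} (p : G.Walk a b)
    (ha : (G.deleteEdges {s(u, v)}).Reachable u a ∨ (G.deleteEdges {s(u, v)}).Reachable v a) :
    (G.deleteEdges {s(u, v)}).Reachable u b ∨ (G.deleteEdges {s(u, v)}).Reachable v b := by
  induction p with
  | nil => exact ha
  | @cons a d b had q ih =>
    refine ih ?_
    by_cases he : s(a, d) = s(u, v)
    · rcases Sym2.eq_iff.mp he with ⟨rfl, rfl⟩ | ⟨rfl, rfl⟩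
      · exact .inr .rfl
      · exact .inl .rfl
    · have had' : (G.deleteEdges {s(u, v)}).Adj a d := by simp [had, he]
      exact ha.imp (·.trans had'.reachable) (·.trans had'.reachable)

theorem IsTree.isCompl_supp_deleteEdges (hG : G.IsTree) {u v : V} (h : G.Adj u v) :
    IsCompl ((G.deleteEdges {s(u, v)}).connectedComponentMk u).supp
      ((G.deleteEdges {s(u, v)}).connectedComponentMk v).supp := by
  have hbridge : G.IsBridge s(u, v) := isAcyclic_iff_forall_adj_isBridge.mp hG.isAcyclic h
  constructor
  · rw [Set.disjoint_left]
    intro x hu hv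
    rw [ConnectedComponent.mem_supp_iff] at hu hv
    exact isBridge_iff.mp hbridge (ConnectedComponent.exact (hu.symm.trans hv))
  · refine codisjoint_iff.mpr (Set.eq_univ_of_forall fun x => ?_)
    obtain ⟨p⟩ := hG.connected.preconnected u x
    exact (p.reachable_deleteEdges_or (v := v) (.inl .rfl)).imp
      (fun h => ConnectedComponent.eq.mpr h.symm) (fun h => ConnectedComponent.eq.mpr h.symm)

theorem Walk.IsHamiltonian.append_cons_reverse_map {V₁ V₂ : Type*} [DecidableEq V]
    [DecidableEq V₁] [DecidableEq V₂] {G₁ : SimpleGraph V₁} {G₂ : SimpleGraph V₂}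
    {f₁ : G₁ →g G} {f₂ : G₂ →g G} (hf₁ : Injective f₁) (hf₂ : Injective f₂)
    (hcompl : IsCompl (Set.range f₁) (Set.range f₂)) {a b : V₁} {c d : V₂}
    {p : G₁.Walk a b} {q : G₂.Walk c d} (hp : p.IsHamiltonian) (hq : q.IsHamiltonian)
    (h : G.Adj (f₁ b) (f₂ d)) :
    ((p.map f₁).append (cons h (q.map f₂).reverse)).IsHamiltonian := by
  have hsupp : ((p.map f₁).append (cons h (q.map f₂).reverse)).support =
      p.support.map f₁ ++ (q.support.map f₂).reverse := by
    simp [support_append, support_map, support_reverse]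
  refine IsPath.isHamiltonian_of_mem ?_ fun x => ?_
  · rw [isPath_def, hsupp, List.nodup_append, List.nodup_reverse]
    refine ⟨hp.isPath.support_nodup.map hf₁, hq.isPath.support_nodup.map hf₂, ?_⟩
    simp only [List.mem_map, List.mem_reverse]
    rintro _ ⟨x, -, rfl⟩ _ ⟨y, -, rfl⟩
    exact hcompl.disjoint.ne_of_mem ⟨x, rfl⟩ ⟨y, rfl⟩
  · rw [hsupp, List.mem_append, List.mem_reverse]
    rcases hcompl.codisjoint.top_le (Set.mem_univ x) with ⟨x, rfl⟩ | ⟨y, rfl⟩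
    · exact .inl (List.mem_map_of_mem (hp.mem_support x))
    · exact .inr (List.mem_map_of_mem (hq.mem_support y))

theorem IsTree.exists_isHamiltonian_graphPow_three [Finite V] [DecidableEq V]
    {T : SimpleGraph V} (hT : T.IsTree) (v : V) :
    ∃ x, T.edist v x ≤ 1 ∧ ∃ p : (graphPow T 3).Walk v x, p.IsHamiltonian := by
  induction hn : Nat.card V using Nat.strong_induction_on generalizing V with
  | _ n ih =>
  subst hn
  rcases subsingleton_or_nontrivial V with hV | hV
  · exact ⟨v, by simp, .nil, .of_subsingleton⟩
  obtain ⟨w, hvw⟩ := hT.connected.preconnected.exists_adj_of_nontrivial v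
  set T' := T.deleteEdges {s(v, w)}
  have hT' : T'.IsAcyclic := hT.isAcyclic.anti (deleteEdges_le _)
  set A := T'.connectedComponentMk v
  set B := T'.connectedComponentMk w
  have hAB : IsCompl A.supp B.supp := hT.isCompl_supp_deleteEdges hvw
  obtain ⟨x, hvx, p, hp⟩ := ih _ (Finite.card_subtype_lt (x := w)
    (hAB.disjoint.notMem_of_mem_right rfl)) (hT'.isTree_connectedComponent A) ⟨v, rfl⟩ rfl
  obtain ⟨y, hwy, q, hq⟩ := ih _ (Finite.card_subtype_lt (x := v)
    (hAB.disjoint.notMem_of_mem_left rfl)) (hT'.isTree_connectedComponent B) ⟨w, rfl⟩ rfl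
  let fA : A.toSimpleGraph →g T := (Hom.ofLE (deleteEdges_le _)).comp A.toSimpleGraph_hom
  let fB : B.toSimpleGraph →g T := (Hom.ofLE (deleteEdges_le _)).comp B.toSimpleGraph_hom
  have hfA : Injective fA := Subtype.val_injective
  have hfB : Injective fB := Subtype.val_injective
  have hjump : (graphPow T 3).Adj x y := by
    refine ⟨hAB.disjoint.ne_of_mem x.2 y.2, ?_⟩
    calc T.edist x y ≤ T.edist x w + T.edist w y := T.edist_triangle
      _ ≤ T.edist x v + T.edist v w + T.edist w y := by gcongr; exact T.edist_triangle
      _ ≤ 1 + 1 + 1 := by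
          gcongr
          · rw [edist_comm]; exact (fA.edist_le ⟨v, rfl⟩ x).trans hvx
          · exact (edist_eq_one_iff_adj.mpr hvw).le
          · exact (fB.edist_le ⟨w, rfl⟩ y).trans hwy
      _ = 3 := by norm_num
  have hrange : IsCompl (Set.range (fA.graphPow hfA 3)) (Set.range (fB.graphPow hfB 3)) := by
    convert hAB <;> exact Subtype.range_coe
  exact ⟨w, (edist_eq_one_iff_adj.mpr hvw).le, _,
    hp.append_cons_reverse_map (f₁ := fA.graphPow hfA 3) (f₂ := fB.graphPow hfB 3)
      hfA hfB hrange hq hjump⟩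

end SimpleGraph

/-- If `T` is a finite tree with at least two vertices and `v` is a vertex of `T`, then
`T³` has a Hamiltonian path from `v` to a neighbour of `v` in `T`. -/
theorem hamiltonian_path_in_cube_of_finite_tree
    {V : Type*} [Fintype V] [DecidableEq V] (T : SimpleGraph V) (hT : T.IsTree)
    (hcard : 2 ≤ Fintype.card V) (v : V) :
    ∃ w : V, T.Adj v w ∧
      ∃ p : (graphPow T 3).Walk v w, p.IsHamiltonian := by
  obtain ⟨w, hvw, p, hp⟩ := hT.exists_isHamiltonian_graphPow_three v
  refine ⟨w, (SimpleGraph.edist_le_one_iff_adj_or_eq.mp hvw).resolve_right ?_, p, hp⟩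
  rintro rfl
  obtain ⟨u, hu⟩ := Fintype.exists_ne_of_one_lt_card hcard v
  have hu_mem := hp.mem_support u
  rw [SimpleGraph.Walk.nil_iff_support_eq.mp (SimpleGraph.Walk.isPath_iff_nil.mp hp.isPath)]
    at hu_mem
  exact hu (List.mem_singleton.mp hu_mem)
end
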